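/- Let R̄_EWC = 2N√(T log K) + T·N·l and R̄_LinUCB = C·N·√(T·d·log³(A·T·log T/δ)) with C > 2, l > 0, N ≥ 1, and log K ≤ 1 ≤ d·log³(A·T·log T/δ). If T < ((C−2)/l)², then R̄_EWC < R̄_LinUCB. -/
import Mathlib


/-- Advantage of EWC over LinUCB for small T. -/
theorem ewc_beats_linucb (N T K A d : ℕ) (hN : 1 ≤ N) (hT : 1 ≤ T) (hK : 1 ≤ K)
    (hA : 2 ≤ A) (hd : 1 ≤ d) (δ l C : ℝ) (hδ : δ ∈ Set.Ioo (0 : ℝ) 1)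
    (hl : 0 < l) (hC : 2 < C)
    (hlogK : Real.log K ≤ 1)
    (hlogd : 1 ≤ (d : ℝ) * (Real.log ((A : ℝ) * T * Real.log T / δ)) ^ 3)
    (hTsmall : (T : ℝ) < ((C - 2) / l) ^ 2) :
    2 * (N : ℝ) * Real.sqrt (T * Real.log K) + (T : ℝ) * N * l
      < C * N * Real.sqrt ((T : ℝ) * d * (Real.log ((A : ℝ) * T * Real.log T / δ)) ^ 3) := by
  have hT' : (1 : ℝ) ≤ (T : ℝ) := by exact_mod_cast hT
  have hN' : (1 : ℝ) ≤ (N : ℝ) := by exact_mod_cast hN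
  set X := ((Real.log ((A : ℝ) * T * Real.log T / δ)) ^ 3) with hX
  have hs0 : (0 : ℝ) ≤ Real.sqrt T := Real.sqrt_nonneg _
  have hL : Real.sqrt (T : ℝ) ≤ Real.sqrt ((T : ℝ) * d * X) := by
    apply Real.sqrt_le_sqrt
    nlinarith
  have h1 : Real.sqrt ((T : ℝ) * Real.log K) ≤ Real.sqrt (T : ℝ) := by
    apply Real.sqrt_le_sqrt
    nlinarith
  have h2 : Real.sqrt (T : ℝ) < (C - 2) / l := by
    have := Real.sqrt_lt_sqrt (by positivity) hTsmall
    rwa [Real.sqrt_sq (le_of_lt (div_pos (by linarith) hl))] at this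
  have h3 : Real.sqrt (T : ℝ) * l < C - 2 := by
    rw [← lt_div_iff₀ hl] at *
    exact h2
  have hsq : Real.sqrt (T : ℝ) * Real.sqrt (T : ℝ) = (T : ℝ) :=
    Real.mul_self_sqrt (by positivity)
  have hs1 : (1 : ℝ) ≤ Real.sqrt T := by nlinarith
  have hNpos : (0 : ℝ) < (N : ℝ) * Real.sqrt T := by nlinarith
  have hA' := mul_lt_mul_of_pos_left h3 hNpos
  have hB := mul_le_mul_of_nonneg_left h1 (by nlinarith : (0:ℝ) ≤ 2 * (N:ℝ))
  have hD := mul_le_mul_of_nonneg_left hL (by nlinarith : (0:ℝ) ≤ C * (N:ℝ))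
  have hTl : (T : ℝ) * N * l = ((N : ℝ) * Real.sqrt T) * (Real.sqrt T * l) := by
    linear_combination -(N : ℝ) * l * hsq
  have hring : 2 * (N : ℝ) * Real.sqrt T + ((N : ℝ) * Real.sqrt T) * (C - 2)
      = C * N * Real.sqrt T := by ring
  linarith [hA', hB, hD]
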